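/- Assume the setup: κ is a singular cardinal with cf(κ) = ρ, 2^ρ ≤ κ, and ρ < μ_0, where ⟨μ_i : i < ρ⟩ is an increasing sequence cofinal in κ, each μ_i carries a μ_i-complete uniform ultrafilter U_i with an almost-decreasing generating sequence ⟨A^i_η : η < θ_i⟩ of regular length θ_i with A^i_η ⊆ [μ_i^*, μ_i) where μ_i^* = sup_{i'<i} μ_{i'}; ⟨f_α : α < σ⟩ is a scale in ∏_{i<ρ} μ_i with σ regular and κ < σ; ⟨g_β : β < τ⟩ is a scale in ∏_{i<ρ} θ_i with τ regular and σ ≤ τ; E is a uniform ultrafilter on ρ; for X ∈ E, α < σ, β < τ set Y_{X,α,β} = ⋃_{i∈X} (A^i_{g_β(i)} \ f_α(i)); and assume the sets Y_{X,α,β} generate an ultrafilter U on κ (equivalently, Y ∈ U if and only if Y_{X,α,β} ⊆ Y for some X, α, β). Then the character of U is exactly τ: the family {Y_{X,α,β}} is a base for U of cardinality τ, and no base for U has cardinality less than τ. -/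

import Mathlib

universe u

open Cardinal Set

/-- `A ⊆* B` below the cardinal `κ`: the difference `A \ B` is bounded below `κ`
(where `κ` is identified with its set of ordinals `Set.Iio κ.ord`). -/
def AlmostSub (κ : Cardinal.{u}) (A B : Set Ordinal.{u}) : Prop :=
  ∃ β, β < κ.ord ∧ A \ B ⊆ Set.Iio β

/-- An ultrafilter on the cardinal `κ`, identified with its set of ordinals `Set.Iio κ.ord`. -/
structure UltrafilterOn (κ : Cardinal.{u}) : Type (u + 1) where
  sets : Set (Set Ordinal.{u})
  sets_subset : ∀ A ∈ sets, A ⊆ Set.Iio κ.ord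
  univ_mem : Set.Iio κ.ord ∈ sets
  superset_mem : ∀ A ∈ sets, ∀ B, B ⊆ Set.Iio κ.ord → A ⊆ B → B ∈ sets
  inter_mem : ∀ A ∈ sets, ∀ B ∈ sets, A ∩ B ∈ sets
  empty_not_mem : ∅ ∉ sets
  mem_or_compl_mem : ∀ A, A ⊆ Set.Iio κ.ord → A ∈ sets ∨ Set.Iio κ.ord \ A ∈ sets

namespace UltrafilterOn

variable {κ : Cardinal.{u}}

/-- A uniform ultrafilter: every member has cardinality `κ`. -/
def IsUniform (U : UltrafilterOn κ) : Prop :=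
  ∀ A ∈ U.sets, #A = Cardinal.lift.{u + 1, u} κ

/-- `κ`-completeness: `U` is closed under intersections of fewer than `κ` many of its members. -/
def IsComplete (U : UltrafilterOn κ) : Prop :=
  ∀ S : Set (Set Ordinal.{u}), S.Nonempty → S ⊆ U.sets →
    #S < Cardinal.lift.{u + 1, u} κ → ⋂₀ S ∈ U.sets

/-- Nonprincipal: no singleton is a member. -/
def IsNonprincipal (U : UltrafilterOn κ) : Prop :=
  ∀ β : Ordinal.{u}, {β} ∉ U.sets

/-- A base for `U`: a subfamily `B ⊆ U` such that every member of `U` almost contains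
a member of `B`. -/
def IsBase (U : UltrafilterOn κ) (B : Set (Set Ordinal.{u})) : Prop :=
  B ⊆ U.sets ∧ ∀ X ∈ U.sets, ∃ Y ∈ B, AlmostSub κ Y X

/-- The character of `U`: the least cardinality of a base for `U`. -/
noncomputable def char (U : UltrafilterOn κ) : Cardinal.{u + 1} :=
  sInf {c | ∃ B, U.IsBase B ∧ #B = c}

/-- `⟨A i : i < θord⟩` is an almost-decreasing generating sequence for `U`:
its entries are members of `U`, it is `⊆*`-decreasing, and its range is a base for `U`. -/
def IsADGenSeq (U : UltrafilterOn κ) (θord : Ordinal.{u})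
    (A : Ordinal.{u} → Set Ordinal.{u}) : Prop :=
  (∀ i, i < θord → A i ∈ U.sets) ∧
  (∀ i j, i ≤ j → j < θord → AlmostSub κ (A j) (A i)) ∧
  U.IsBase (A '' Set.Iio θord)

/-- A normal measure on `κ`: a `κ`-complete nonprincipal ultrafilter such that every
function regressive on a member of `U` is constant on a member of `U`. -/
def IsNormalMeasure (U : UltrafilterOn κ) : Prop :=
  U.IsComplete ∧ U.IsNonprincipal ∧
  ∀ f : Ordinal.{u} → Ordinal.{u},
    (∃ X ∈ U.sets, ∀ α ∈ X, f α < α) → ∃ Y ∈ U.sets, ∃ c, ∀ α ∈ Y, f α = c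

end UltrafilterOn

/-- `κ` is a measurable cardinal: it is uncountable and carries a `κ`-complete
nonprincipal ultrafilter. -/
def IsMeasurableCard (κ : Cardinal.{u}) : Prop :=
  ℵ₀ < κ ∧ ∃ U : UltrafilterOn κ, U.IsComplete ∧ U.IsNonprincipal

/-- `f <* g`: eventual (pointwise) domination below `ρord`. -/
def EvDomLt (ρord : Ordinal.{u}) (f g : Ordinal.{u} → Ordinal.{u}) : Prop :=
  ∃ i₀, i₀ < ρord ∧ ∀ i, i₀ ≤ i → i < ρord → f i < g i

/-- Membership in the product `∏_{i < ρord} lam i` (of cardinals `lam i`). -/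
def InProd (ρord : Ordinal.{u}) (lam : Ordinal.{u} → Cardinal.{u})
    (f : Ordinal.{u} → Ordinal.{u}) : Prop :=
  ∀ i, i < ρord → f i < (lam i).ord

/-- `⟨g η : η < ν⟩` is a scale of length `ν` in `∏_{i < ρord} lam i`:
a `<*`-increasing and `<*`-cofinal sequence in the product. -/
def IsScale (ρord : Ordinal.{u}) (lam : Ordinal.{u} → Cardinal.{u}) (ν : Cardinal.{u})
    (g : Ordinal.{u} → Ordinal.{u} → Ordinal.{u}) : Prop :=
  (∀ η, η < ν.ord → InProd ρord lam (g η)) ∧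
  (∀ η₁ η₂, η₁ < η₂ → η₂ < ν.ord → EvDomLt ρord (g η₁) (g η₂)) ∧
  ∀ f, InProd ρord lam f → ∃ η, η < ν.ord ∧ EvDomLt ρord f (g η)

/-- `supBelow μ i = sup_{i' < i} μ i'`. -/
noncomputable def supBelow (μ : Ordinal.{u} → Cardinal.{u}) (i : Ordinal.{u}) : Cardinal.{u} :=
  sSup {c | ∃ i', i' < i ∧ c = μ i'}

/-!
The family `Y_{X,α,β}` has at most `2^ρ · σ · τ = τ` members. For the lower bound: a uniform
ultrafilter on `μ_i` has no member that is `⊆*` all others, so each `A^i_η` fails to be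
`⊆* A^i_{η'}` for all large `η' < θ_i`. Given fewer than `τ` members of `U`, each containing some
`Y_{X,α,β}`, these jumps read through the scale `⟨g_β⟩`, together with the regularity of `τ`, give
one `β` such that `Y_{ρ,0,β}` almost contains none of them: at a large `i ∈ X`, a point of
`A^i_{g_{β'}(i)} \ A^i_{g_β(i)}` above `f_α(i)` lies in the member but, the blocks `[μ_i^*, μ_i)`
being disjoint, not in `Y_{ρ,0,β}`, and it lies above any given bound below `κ`.
-/

open Order

theorem AlmostSub.trans {κ : Cardinal.{u}} {A B C : Set Ordinal.{u}}
    (hAB : AlmostSub κ A B) (hBC : AlmostSub κ B C) : AlmostSub κ A C := by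
  obtain ⟨b₁, hb₁, h₁⟩ := hAB
  obtain ⟨b₂, hb₂, h₂⟩ := hBC
  refine ⟨max b₁ b₂, max_lt hb₁ hb₂, fun x hx => ?_⟩
  by_cases hxB : x ∈ B
  · exact (mem_Iio.mp (h₂ ⟨hxB, hx.2⟩)).trans_le (le_max_right _ _)
  · exact (mem_Iio.mp (h₁ ⟨hx.1, hxB⟩)).trans_le (le_max_left _ _)

theorem AlmostSub.mono_left {κ : Cardinal.{u}} {A B C : Set Ordinal.{u}}
    (hBC : AlmostSub κ B C) (hAB : A ⊆ B) : AlmostSub κ A C :=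
  let ⟨b, hb, h⟩ := hBC
  ⟨b, hb, (sdiff_subset_sdiff_left hAB).trans h⟩

theorem almostSub_of_subset {κ : Cardinal.{u}} (hκ : 0 < κ.ord) {A B : Set Ordinal.{u}}
    (h : A ⊆ B) : AlmostSub κ A B :=
  ⟨0, hκ, by simp [sdiff_eq_empty.mpr h]⟩

theorem exists_le_mem_of_lift_le_mk {c : Cardinal.{u}} {s : Set Ordinal.{u}}
    (hs : lift.{u + 1} c ≤ #s) {b : Ordinal.{u}} (hb : b < c.ord) : ∃ x ∈ s, b ≤ x := by
  by_contra! h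
  have hsb : #s ≤ lift.{u + 1} b.card :=
    (mk_le_mk_of_subset fun x hx => h x hx).trans (mk_Iio_ordinal b).le
  exact (lift_lt.mpr (lt_ord.mp hb)).not_ge (hs.trans hsb)

theorem exists_forall_lt_of_mk_lt {τ : Cardinal.{u}} (hτ : τ.IsRegular) {s : Set Ordinal.{u}}
    (hs : ∀ x ∈ s, x < τ.ord) (hcard : #s < lift.{u + 1} τ) : ∃ β < τ.ord, ∀ x ∈ s, x < β := by
  have hsup : sSup s < τ.ord :=
    Ordinal.sSup_lt_of_lt_cof (by rwa [← Ordinal.lift_cof, hτ.cof_ord]) hs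
  exact ⟨sSup s + 1, (isSuccLimit_ord hτ.aleph0_le).add_one_lt hsup,
    fun x hx => Order.lt_add_one_iff.mpr (le_csSup ⟨τ.ord, fun y hy => (hs y hy).le⟩ hx)⟩

theorem exists_subset_mk_eq_mk_diff {α : Type*} {S : Set α} (hS : ℵ₀ ≤ #S) :
    ∃ X ⊆ S, #X = #S ∧ #(S \ X : Set α) = #S := by
  obtain ⟨e⟩ : Nonempty (S ⊕ S ≃ S) := Cardinal.eq.mp (by simp [add_eq_self hS])
  have hinl := e.injective.comp Sum.inl_injective
  have hinr := e.injective.comp Sum.inr_injective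
  refine ⟨Subtype.val '' range (e ∘ Sum.inl), by rintro _ ⟨y, -, rfl⟩; exact y.2, ?_, ?_⟩
  · rw [mk_image_eq Subtype.val_injective, mk_range_eq _ hinl]
  · refine le_antisymm (mk_le_mk_of_subset sdiff_subset) ?_
    calc #S = #(Subtype.val '' range (e ∘ Sum.inr)) := by
          rw [mk_image_eq Subtype.val_injective, mk_range_eq _ hinr]
      _ ≤ #(S \ Subtype.val '' range (e ∘ Sum.inl) : Set α) := by
          refine mk_le_mk_of_subset ?_
          rintro _ ⟨_, ⟨b, rfl⟩, rfl⟩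
          refine ⟨(e (Sum.inr b)).2, ?_⟩
          rintro ⟨z, ⟨a, rfl⟩, h⟩
          exact Sum.inl_ne_inr (e.injective (Subtype.val_injective h))

namespace UltrafilterOn

variable {κ : Cardinal.{u}}

theorem ord_pos (U : UltrafilterOn κ) : 0 < κ.ord := by
  by_contra! h
  apply U.empty_not_mem
  simpa [nonpos_iff_eq_zero.mp h] using U.univ_mem

theorem IsBase.of_forall_exists_subset {U : UltrafilterOn κ} {F : Set (Set Ordinal.{u})}
    (hF : F ⊆ U.sets) (h : ∀ Z ∈ U.sets, ∃ S ∈ F, S ⊆ Z) : U.IsBase F :=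
  ⟨hF, fun Z hZ => (h Z hZ).imp fun _ hS => ⟨hS.1, almostSub_of_subset U.ord_pos hS.2⟩⟩

theorem char_eq_mk_of_isBase {U : UltrafilterOn κ} {F : Set (Set Ordinal.{u})}
    (hF : U.IsBase F) (hmin : ∀ B, U.IsBase B → #F ≤ #B) : U.char = #F :=
  le_antisymm (csInf_le (OrderBot.bddBelow _) ⟨F, hF, rfl⟩)
    (le_csInf ⟨_, F, hF, rfl⟩ (by rintro _ ⟨B, hB, rfl⟩; exact hmin B hB))

theorem mk_sets_le (U : UltrafilterOn κ) : #U.sets ≤ lift.{u + 1} (2 ^ κ) :=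
  calc #U.sets ≤ #(𝒫 Iio κ.ord) := mk_le_mk_of_subset U.sets_subset
    _ = lift.{u + 1} (2 ^ κ) := by simp [mk_powerset, mk_Iio_ordinal]

theorem IsUniform.exists_le_mem {U : UltrafilterOn κ} (hU : U.IsUniform) {X : Set Ordinal.{u}}
    (hX : X ∈ U.sets) {b : Ordinal.{u}} (hb : b < κ.ord) : ∃ i ∈ X, b ≤ i :=
  exists_le_mem_of_lift_le_mk (hU X hX).ge hb

theorem IsUniform.not_forall_almostSub (hκ : ℵ₀ ≤ κ) {U : UltrafilterOn κ} (hU : U.IsUniform)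
    {S : Set Ordinal.{u}} (hS : S ∈ U.sets) : ¬ ∀ X ∈ U.sets, AlmostSub κ S X := by
  intro hall
  have hSκ := hU S hS
  obtain ⟨X, hXS, hX, hSX⟩ := exists_subset_mk_eq_mk_diff (S := S) (by simpa [hSκ] using hκ)
  have hsmall : ∀ Z ∈ U.sets, ¬ lift.{u + 1} κ ≤ #(S \ Z : Set Ordinal.{u}) := by
    intro Z hZ hle
    obtain ⟨b, hb, hsub⟩ := hall Z hZ
    obtain ⟨x, hx, hbx⟩ := exists_le_mem_of_lift_le_mk hle hb
    exact (hsub hx).not_ge hbx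
  rcases U.mem_or_compl_mem X (hXS.trans (U.sets_subset S hS)) with hXU | hXU
  · exact hsmall X hXU (by rw [hSX, hSκ])
  · refine hsmall _ hXU ?_
    calc lift.{u + 1} κ = #X := by rw [hX, hSκ]
      _ ≤ #(S \ (Iio κ.ord \ X) : Set Ordinal.{u}) :=
        mk_le_mk_of_subset fun x hx => ⟨hXS hx, fun h => h.2 hx⟩

theorem IsADGenSeq.exists_forall_not_almostSub (hκ : ℵ₀ ≤ κ) {U : UltrafilterOn κ}
    (hU : U.IsUniform) {θ : Ordinal.{u}} {A : Ordinal.{u} → Set Ordinal.{u}}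
    (hA : U.IsADGenSeq θ A) {η : Ordinal.{u}} (hη : η < θ) :
    ∃ η' < θ, ∀ η₂, η' ≤ η₂ → η₂ < θ → ¬ AlmostSub κ (A η) (A η₂) := by
  by_contra! h
  refine hU.not_forall_almostSub hκ (hA.1 η hη) fun X hX => ?_
  obtain ⟨_, ⟨η', hη', rfl⟩, hX'⟩ := hA.2.2.2 X hX
  obtain ⟨η₂, hle, hη₂, hsub⟩ := h η' hη'
  exact (hsub.trans (hA.2.1 η' η₂ hle hη₂)).trans hX'

theorem lift_le_mk_of_isBase {U : UltrafilterOn κ} {τ : Cardinal.{u}} (hτ : τ.IsRegular)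
    (T : Ordinal.{u} → Set Ordinal.{u}) (hT : ∀ β < τ.ord, T β ∈ U.sets)
    (hesc : ∀ Z ∈ U.sets, ∃ β' < τ.ord, ∀ β, β' < β → β < τ.ord → ¬ AlmostSub κ Z (T β))
    {B : Set (Set Ordinal.{u})} (hB : U.IsBase B) : lift.{u + 1} τ ≤ #B := by
  by_contra! hcard
  choose β' hβ' hesc' using fun Z : B => hesc Z (hB.1 Z.2)
  obtain ⟨β, hβ, hlt⟩ := exists_forall_lt_of_mk_lt hτ (s := range β')
    (by rintro _ ⟨Z, rfl⟩; exact hβ' Z) (mk_range_le.trans_lt hcard)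
  obtain ⟨Z, hZ, hZT⟩ := hB.2 _ (hT β hβ)
  exact hesc' (⟨Z, hZ⟩ : B) β (hlt _ ⟨_, rfl⟩) hβ hZT

end UltrafilterOn

theorem EvDomLt.trans {ρo : Ordinal.{u}} {f g h : Ordinal.{u} → Ordinal.{u}}
    (hfg : EvDomLt ρo f g) (hgh : EvDomLt ρo g h) : EvDomLt ρo f h := by
  obtain ⟨i₁, hi₁, h₁⟩ := hfg
  obtain ⟨i₂, hi₂, h₂⟩ := hgh
  exact ⟨max i₁ i₂, max_lt hi₁ hi₂, fun i hi hiρ =>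
    (h₁ i (le_of_max_le_left hi) hiρ).trans (h₂ i (le_of_max_le_right hi) hiρ)⟩

theorem le_supBelow (μ : Ordinal.{u} → Cardinal.{u}) {j i : Ordinal.{u}} (h : j < i) :
    μ j ≤ supBelow μ i := by
  have hrange : {c | ∃ i', i' < i ∧ c = μ i'} = μ '' Iio i := by
    ext; simp [eq_comm]
  refine le_csSup ?_ ⟨j, h, rfl⟩
  rw [hrange]
  exact bddAbove_of_small

theorem exists_forall_lt_supBelow {κ : Cardinal.{u}} {ρo : Ordinal.{u}} (hρo : IsSuccLimit ρo)
    {μ : Ordinal.{u} → Cardinal.{u}} (hμmono : ∀ i j, i < j → j < ρo → μ i < μ j)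
    (hμcofinal : ∀ c, c < κ → ∃ i, i < ρo ∧ c ≤ μ i) {b : Ordinal.{u}} (hb : b < κ.ord) :
    ∃ i₀ < ρo, ∀ i, i₀ ≤ i → b < (supBelow μ i).ord := by
  obtain ⟨i, hi, hbi⟩ := hμcofinal b.card (lt_ord.mp hb)
  refine ⟨i + 1 + 1, hρo.add_one_lt (hρo.add_one_lt hi), fun j hj => lt_ord.mpr ?_⟩
  calc b.card ≤ μ i := hbi
    _ < μ (i + 1) := hμmono _ _ (lt_add_one i) (hρo.add_one_lt hi)
    _ ≤ supBelow μ j := le_supBelow μ ((lt_add_one _).trans_le hj)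

theorem not_mem_biUnion_of_mem_block {μ : Ordinal.{u} → Cardinal.{u}}
    {S : Ordinal.{u} → Set Ordinal.{u}} {X : Set Ordinal.{u}}
    (hS : ∀ j ∈ X, S j ⊆ Ico (supBelow μ j).ord (μ j).ord) {i x : Ordinal.{u}}
    (hx : x ∈ Ico (supBelow μ i).ord (μ i).ord) (hxi : x ∉ S i) : x ∉ ⋃ j ∈ X, S j := by
  simp only [mem_iUnion₂, not_exists]
  intro j hj hxj
  have hxj' := hS j hj hxj
  rcases lt_trichotomy j i with hji | rfl | hij
  · exact (hxj'.2.trans_le (ord_le_ord.mpr (le_supBelow μ hji))).not_ge hx.1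
  · exact hxi hxj
  · exact (hx.2.trans_le (ord_le_ord.mpr (le_supBelow μ hij))).not_ge hxj'.1

/-- The set `Y_{X,α,β}` of the paper. -/
def blockUnion (A : Ordinal.{u} → Ordinal.{u} → Set Ordinal.{u})
    (f g : Ordinal.{u} → Ordinal.{u} → Ordinal.{u}) (X : Set Ordinal.{u}) (α β : Ordinal.{u}) :
    Set Ordinal.{u} :=
  ⋃ i ∈ X, (A i (g β i) \ Iio (f α i))

section blockUnion

variable {ρo : Ordinal.{u}} {μ θ : Ordinal.{u} → Cardinal.{u}}
  {A : Ordinal.{u} → Ordinal.{u} → Set Ordinal.{u}} {f g : Ordinal.{u} → Ordinal.{u} → Ordinal.{u}}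

theorem blockUnion_subset_Iio {κ : Cardinal.{u}} (hμlt : ∀ i, i < ρo → μ i < κ)
    (hAsub : ∀ i, i < ρo → ∀ η, η < (θ i).ord → A i η ⊆ Ico (supBelow μ i).ord (μ i).ord)
    {X : Set Ordinal.{u}} (hX : X ⊆ Iio ρo) (α : Ordinal.{u}) {β : Ordinal.{u}}
    (hgβ : InProd ρo θ (g β)) : blockUnion A f g X α β ⊆ Iio κ.ord :=
  iUnion₂_subset fun i hi => sdiff_subset.trans <| (hAsub i (hX hi) _ (hgβ i (hX hi))).trans <|
    Ico_subset_Iio_self.trans (Iio_subset_Iio (ord_le_ord.mpr (hμlt i (hX hi)).le))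

theorem exists_mem_blockUnion_not_mem
    (hAsub : ∀ i, i < ρo → ∀ η, η < (θ i).ord → A i η ⊆ Ico (supBelow μ i).ord (μ i).ord)
    {X X' : Set Ordinal.{u}} (hX' : X' ⊆ Iio ρo) {α α' β β₂ i : Ordinal.{u}}
    (hgβ₂ : InProd ρo θ (g β₂)) (hiX : i ∈ X) (hi : i < ρo) (hgβ : g β i < (θ i).ord)
    (hfα : f α i < (μ i).ord) (hnot : ¬ AlmostSub (μ i) (A i (g β i)) (A i (g β₂ i))) :
    ∃ x ∈ blockUnion A f g X α β, x ∉ blockUnion A f g X' α' β₂ ∧ (supBelow μ i).ord ≤ x := by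
  obtain ⟨x, ⟨hxA, hxA₂⟩, hxf⟩ := not_subset.mp fun h => hnot ⟨_, hfα, h⟩
  have hxblock := hAsub i hi _ hgβ hxA
  refine ⟨x, mem_biUnion hiX ⟨hxA, hxf⟩, ?_, hxblock.1⟩
  refine not_mem_biUnion_of_mem_block (fun j hj => ?_) hxblock fun h => hxA₂ h.1
  exact sdiff_subset.trans (hAsub j (hX' hj) _ (hgβ₂ j (hX' hj)))

theorem exists_forall_not_almostSub_blockUnion {κ ρ τ : Cardinal.{u}} (hρ : ℵ₀ ≤ ρ)
    (hμmono : ∀ i j, i < j → j < ρ.ord → μ i < μ j)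
    (hμcofinal : ∀ c, c < κ → ∃ i, i < ρ.ord ∧ c ≤ μ i)
    (hjump : ∀ i < ρ.ord, ∀ η < (θ i).ord, ∃ η' < (θ i).ord,
      ∀ η₂, η' ≤ η₂ → η₂ < (θ i).ord → ¬ AlmostSub (μ i) (A i η) (A i η₂))
    (hAsub : ∀ i, i < ρ.ord → ∀ η, η < (θ i).ord → A i η ⊆ Ico (supBelow μ i).ord (μ i).ord)
    (hg : IsScale ρ.ord θ τ g) {X : Set Ordinal.{u}} (hX : X ⊆ Iio ρ.ord)
    (hXunb : ∀ b < ρ.ord, ∃ i ∈ X, b ≤ i) {α β : Ordinal.{u}} (hfα : InProd ρ.ord μ (f α))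
    (hβ : β < τ.ord) :
    ∃ β' < τ.ord, ∀ β₂, β' < β₂ → β₂ < τ.ord → ∀ X' ⊆ Iio ρ.ord, ∀ α',
      ¬ AlmostSub κ (blockUnion A f g X α β) (blockUnion A f g X' α' β₂) := by
  have hjumpβ : ∀ i, ∃ η', i < ρ.ord → η' < (θ i).ord ∧
      ∀ η₂, η' ≤ η₂ → η₂ < (θ i).ord → ¬ AlmostSub (μ i) (A i (g β i)) (A i η₂) := by
    intro i
    by_cases hi : i < ρ.ord
    · obtain ⟨η', h⟩ := hjump i hi _ (hg.1 β hβ i hi)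
      exact ⟨η', fun _ => h⟩
    · exact ⟨0, fun h => absurd h hi⟩
  choose F hF using hjumpβ
  obtain ⟨β', hβ', hFβ'⟩ := hg.2.2 F fun i hi => (hF i hi).1
  refine ⟨β', hβ', fun β₂ hβ₂ hβ₂τ X' hX' α' ⟨b, hb, hsub⟩ => ?_⟩
  obtain ⟨i₁, hi₁, hdom⟩ := hFβ'.trans (hg.2.1 β' β₂ hβ₂ hβ₂τ)
  obtain ⟨i₀, hi₀, hbsup⟩ :=
    exists_forall_lt_supBelow (isSuccLimit_ord hρ) hμmono hμcofinal hb
  obtain ⟨i, hiX, hi⟩ := hXunb _ (max_lt hi₁ hi₀)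
  have hiρ := hX hiX
  have hnot := (hF i hiρ).2 _ (hdom i (le_of_max_le_left hi) hiρ).le (hg.1 β₂ hβ₂τ i hiρ)
  obtain ⟨x, hxY, hxY', hx⟩ := exists_mem_blockUnion_not_mem hAsub hX' (hg.1 β₂ hβ₂τ) hiX hiρ
    (hg.1 β hβ i hiρ) (hfα i hiρ) hnot
  exact lt_irrefl b (((hbsup i (le_of_max_le_right hi)).trans_le hx).trans (hsub ⟨hxY, hxY'⟩))

end blockUnion

theorem UltrafilterOn.mk_setOf_exists_mem_sets_le {ρ σ τ : Cardinal.{u}} (E : UltrafilterOn ρ)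
    (h2ρ : 2 ^ ρ ≤ τ) (hστ : σ ≤ τ) (hτ : ℵ₀ ≤ τ)
    (Y : Set Ordinal.{u} → Ordinal.{u} → Ordinal.{u} → Set Ordinal.{u}) :
    #{S : Set Ordinal.{u} | ∃ X ∈ E.sets, ∃ α, α < σ.ord ∧ ∃ β, β < τ.ord ∧ S = Y X α β}
      ≤ lift.{u + 1} τ := by
  have hτ' : ℵ₀ ≤ lift.{u + 1} τ := by simpa using hτ
  calc _ ≤ #(range fun p : E.sets × Iio σ.ord × Iio τ.ord => Y p.1 p.2.1 p.2.2) := by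
        refine mk_le_mk_of_subset ?_
        rintro _ ⟨X, hX, α, hα, β, hβ, rfl⟩
        exact ⟨⟨⟨X, hX⟩, ⟨α, hα⟩, ⟨β, hβ⟩⟩, rfl⟩
    _ ≤ #(E.sets × Iio σ.ord × Iio τ.ord) := mk_range_le
    _ = #E.sets * (lift.{u + 1} σ * lift.{u + 1} τ) := by simp [mk_prod, mk_Iio_ordinal]
    _ ≤ lift.{u + 1} τ * (lift.{u + 1} τ * lift.{u + 1} τ) := by
        gcongr
        · exact E.mk_sets_le.trans (lift_le.mpr h2ρ)
        · exact lift_le.mpr hστ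
    _ = lift.{u + 1} τ := by rw [mul_eq_self hτ', mul_eq_self hτ']

theorem statement3_general
    (κ ρ σ τ : Cardinal.{u})
    (hκinf : ℵ₀ ≤ κ) (hκcof : κ.ord.cof = ρ)
    (h2ρ : 2 ^ ρ ≤ κ)
    (μ θ : Ordinal.{u} → Cardinal.{u})
    (hρμ0 : ρ < μ 0)
    (hμmono : ∀ i j, i < j → j < ρ.ord → μ i < μ j)
    (hμlt : ∀ i, i < ρ.ord → μ i < κ)
    (hμcofinal : ∀ c, c < κ → ∃ i, i < ρ.ord ∧ c ≤ μ i)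
    (Ui : (i : Ordinal.{u}) → UltrafilterOn (μ i))
    (A : Ordinal.{u} → Ordinal.{u} → Set Ordinal.{u})
    (hUi : ∀ i, i < ρ.ord → (Ui i).IsUniform ∧ (Ui i).IsComplete ∧
      (Ui i).IsADGenSeq (θ i).ord (A i))
    (hAsub : ∀ i, i < ρ.ord → ∀ η, η < (θ i).ord →
      A i η ⊆ Set.Ico (supBelow μ i).ord (μ i).ord)
    (f g : Ordinal.{u} → Ordinal.{u} → Ordinal.{u})
    (hκσ : κ < σ)
    (hf : IsScale ρ.ord μ σ f)
    (hτreg : τ.IsRegular) (hστ : σ ≤ τ)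
    (hg : IsScale ρ.ord θ τ g)
    (E : UltrafilterOn ρ) (hE : E.IsUniform)
    (Y : Set Ordinal.{u} → Ordinal.{u} → Ordinal.{u} → Set Ordinal.{u})
    (hY : ∀ X α β, Y X α β = ⋃ i ∈ X, (A i (g β i) \ Set.Iio (f α i)))
    (W : UltrafilterOn κ)
    (hW : W.sets = {Z | Z ⊆ Set.Iio κ.ord ∧
      ∃ X ∈ E.sets, ∃ α, α < σ.ord ∧ ∃ β, β < τ.ord ∧ Y X α β ⊆ Z}) :
    W.IsBase {S : Set Ordinal.{u} | ∃ X ∈ E.sets, ∃ α, α < σ.ord ∧ ∃ β, β < τ.ord ∧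
        S = Y X α β} ∧
    #({S : Set Ordinal.{u} | ∃ X ∈ E.sets, ∃ α, α < σ.ord ∧ ∃ β, β < τ.ord ∧ S = Y X α β})
        = Cardinal.lift.{u + 1, u} τ ∧
    (∀ B, W.IsBase B → Cardinal.lift.{u + 1, u} τ ≤ #B) ∧
    W.char = Cardinal.lift.{u + 1, u} τ := by
  obtain rfl : Y = blockUnion A f g := by funext X α β; exact hY X α β
  have hρ : ℵ₀ ≤ ρ :=
    hκcof ▸ Ordinal.aleph0_le_cof_iff.mpr (Ordinal.one_lt_cof_iff.mpr (isSuccLimit_ord hκinf))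
  have hμinf : ∀ i < ρ.ord, ℵ₀ ≤ μ i := fun i hi => by
    rcases eq_zero_or_pos i with rfl | h0i
    · exact hρ.trans hρμ0.le
    · exact hρ.trans (hρμ0.trans (hμmono 0 i h0i hi)).le
  have hmem : ∀ X ∈ E.sets, ∀ α, α < σ.ord → ∀ β, β < τ.ord → blockUnion A f g X α β ∈ W.sets :=
    fun X hX α hα β hβ => by
      rw [hW]
      exact ⟨blockUnion_subset_Iio hμlt hAsub (E.sets_subset X hX) α (hg.1 β hβ),
        X, hX, α, hα, β, hβ, subset_rfl⟩
  have hbase : W.IsBase {S | ∃ X ∈ E.sets, ∃ α, α < σ.ord ∧ ∃ β, β < τ.ord ∧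
      S = blockUnion A f g X α β} := by
    refine .of_forall_exists_subset ?_ fun Z hZ => ?_
    · rintro _ ⟨X, hX, α, hα, β, hβ, rfl⟩
      exact hmem X hX α hα β hβ
    · rw [hW] at hZ
      obtain ⟨-, X, hX, α, hα, β, hβ, hsub⟩ := hZ
      exact ⟨_, ⟨X, hX, α, hα, β, hβ, rfl⟩, hsub⟩
  have hlower : ∀ B, W.IsBase B → lift.{u + 1} τ ≤ #B := fun B hB => by
    refine W.lift_le_mk_of_isBase hτreg (blockUnion A f g (Iio ρ.ord) 0)
      (hmem _ E.univ_mem 0 (ord_pos.mpr (zero_le.trans_lt hκσ))) (fun Z hZ => ?_) hB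
    rw [hW] at hZ
    obtain ⟨-, X, hX, α, hα, β, hβ, hsub⟩ := hZ
    obtain ⟨β', hβ', hesc⟩ := exists_forall_not_almostSub_blockUnion hρ hμmono hμcofinal
      (fun i hi _ hη => (hUi i hi).2.2.exists_forall_not_almostSub (hμinf i hi) (hUi i hi).1 hη)
      hAsub hg (E.sets_subset X hX) (fun _ hb => hE.exists_le_mem hX hb) (hf.1 α hα) hβ
    exact ⟨β', hβ', fun β₂ h₁ h₂ hZT => hesc β₂ h₁ h₂ _ subset_rfl 0 (hZT.mono_left hsub)⟩
  have hcard := le_antisymm (E.mk_setOf_exists_mem_sets_le (h2ρ.trans (hκσ.le.trans hστ)) hστ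
    hτreg.aleph0_le _) (hlower _ hbase)
  exact ⟨hbase, hcard, hlower, hcard ▸ W.char_eq_mk_of_isBase hbase fun B hB => hcard ▸ hlower B hB⟩

/-- if the sets `Y X α β` generate the ultrafilter `W` on `κ`, then the
character of `W` is exactly `τ`: the family is a base of cardinality `τ` and no base has
cardinality less than `τ`. -/
theorem statement3
    (κ ρ σ τ : Cardinal.{u})
    (hκinf : ℵ₀ ≤ κ) (hκsing : κ.ord.cof < κ) (hκcof : κ.ord.cof = ρ)
    (h2ρ : 2 ^ ρ ≤ κ)
    (μ θ : Ordinal.{u} → Cardinal.{u})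
    (hρμ0 : ρ < μ 0)
    (hμmono : ∀ i j, i < j → j < ρ.ord → μ i < μ j)
    (hμlt : ∀ i, i < ρ.ord → μ i < κ)
    (hμcofinal : ∀ c, c < κ → ∃ i, i < ρ.ord ∧ c ≤ μ i)
    (hθreg : ∀ i, i < ρ.ord → (θ i).IsRegular)
    (Ui : (i : Ordinal.{u}) → UltrafilterOn (μ i))
    (A : Ordinal.{u} → Ordinal.{u} → Set Ordinal.{u})
    (hUi : ∀ i, i < ρ.ord → (Ui i).IsUniform ∧ (Ui i).IsComplete ∧
      (Ui i).IsADGenSeq (θ i).ord (A i))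
    (hAsub : ∀ i, i < ρ.ord → ∀ η, η < (θ i).ord →
      A i η ⊆ Set.Ico (supBelow μ i).ord (μ i).ord)
    (f g : Ordinal.{u} → Ordinal.{u} → Ordinal.{u})
    (hσreg : σ.IsRegular) (hκσ : κ < σ)
    (hf : IsScale ρ.ord μ σ f)
    (hτreg : τ.IsRegular) (hστ : σ ≤ τ)
    (hg : IsScale ρ.ord θ τ g)
    (E : UltrafilterOn ρ) (hE : E.IsUniform)
    (Y : Set Ordinal.{u} → Ordinal.{u} → Ordinal.{u} → Set Ordinal.{u})
    (hY : ∀ X α β, Y X α β = ⋃ i ∈ X, (A i (g β i) \ Set.Iio (f α i)))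
    (W : UltrafilterOn κ)
    (hW : W.sets = {Z | Z ⊆ Set.Iio κ.ord ∧
      ∃ X ∈ E.sets, ∃ α, α < σ.ord ∧ ∃ β, β < τ.ord ∧ Y X α β ⊆ Z}) :
    W.IsBase {S : Set Ordinal.{u} | ∃ X ∈ E.sets, ∃ α, α < σ.ord ∧ ∃ β, β < τ.ord ∧
        S = Y X α β} ∧
    #({S : Set Ordinal.{u} | ∃ X ∈ E.sets, ∃ α, α < σ.ord ∧ ∃ β, β < τ.ord ∧ S = Y X α β})
        = Cardinal.lift.{u + 1, u} τ ∧
    (∀ B, W.IsBase B → Cardinal.lift.{u + 1, u} τ ≤ #B) ∧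
    W.char = Cardinal.lift.{u + 1, u} τ :=
  statement3_general κ ρ σ τ hκinf hκcof h2ρ μ θ hρμ0 hμmono hμlt hμcofinal Ui A hUi hAsub f g hκσ
    hf hτreg hστ hg E hE Y hY W hW
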